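/- arXiv:1808.06892 — 3 statements merged into one kernel-verified Lean document; each statement's English description precedes it below -/
import Mathlib

section
/- Let G be a k-inner plane graph that has a good spanning tree T. Then a vertex on the boundary of the outer face of G that is a leaf of T cannot be covered by any edge of G; consequently, for every non-tree edge e, the set C(e) of covered leaves of T contains only inner vertices of G, and hence |C(e)| ≤ k. -/
open scoped Real

/-- A point of the plane. -/
abbrev Pt : Type := ℝ × ℝ

/-- The slope (direction angle, in `[0, 2π)`) of the directed segment from `p` to `q`:
the counter-clockwise angle from the rightward horizontal half-line at `p` to the
half-line from `p` through `q`. -/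
noncomputable def slopeAngle (p q : Pt) : ℝ :=
  if Complex.arg ⟨q.1 - p.1, q.2 - p.2⟩ < 0 then
    Complex.arg ⟨q.1 - p.1, q.2 - p.2⟩ + 2 * Real.pi
  else Complex.arg ⟨q.1 - p.1, q.2 - p.2⟩

/-- The counterclockwise angular gap from direction `a` to direction `b`, in `[0, 2π)`. -/
noncomputable def ccwGap (a b : ℝ) : ℝ :=
  (b - a) - 2 * Real.pi * ⌊(b - a) / (2 * Real.pi)⌋

/-- A rooted tree on the (finite, nonempty) vertex type `V`, encoded by its parent
function: every vertex reaches the root by iterating `parent`, and edges are the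
pairs `(parent v, v)` for `v ≠ root` (directed away from the root). -/
structure RTree (V : Type*) where
  root : V
  parent : V → V
  parent_root : parent root = root
  reaches_root : ∀ v : V, ∃ n : ℕ, parent^[n] v = root

namespace RTree

variable {V : Type*} (T : RTree V)

/-- `u` is a (weak) ancestor of `v`; equivalently, `v` belongs to the subtree `T_u`. -/
def Anc (u v : V) : Prop := ∃ n : ℕ, T.parent^[n] v = u

/-- A leaf of the tree: a vertex with no children. -/
def IsLeaf (v : V) : Prop := ∀ w : V, T.parent w = v → w = v

/-- The tree edges, as unordered pairs. -/
def IsTreeEdge (e : Sym2 V) : Prop := ∃ v : V, v ≠ T.root ∧ e = s(T.parent v, v)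

/-- Adjacency in the tree. -/
def TAdj (a b : V) : Prop := a ≠ b ∧ (T.parent a = b ∨ T.parent b = a)

end RTree

/-- The drawing `D` fits on a `W × H` grid: all vertices are placed at integer grid
points within `[0,W] × [0,H]`. -/
def FitsGrid {V : Type*} (D : V → Pt) (W H : ℕ) : Prop :=
  ∀ v : V, (∃ x : ℤ, (D v).1 = (x : ℝ)) ∧ (∃ y : ℤ, (D v).2 = (y : ℝ)) ∧
    0 ≤ (D v).1 ∧ (D v).1 ≤ (W : ℝ) ∧ 0 ≤ (D v).2 ∧ (D v).2 ≤ (H : ℝ)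

/-- A straight-line drawing of the rooted tree `T` is monotone if every pair of
vertices is connected by a tree path whose orthogonal projections on some line
appear in path order. -/
def MonotoneTreeDrawing {V : Type*} (T : RTree V) (D : V → Pt) : Prop :=
  ∀ u v : V, ∃ (p : List V) (d : Pt), d ≠ 0 ∧
    p.head? = some u ∧ p.getLast? = some v ∧
    p.Chain' T.TAdj ∧
    (p.map fun w => d.1 * (D w).1 + d.2 * (D w).2).Chain' (· < ·)

/-- Non-strictly slope-disjoint drawing of a rooted tree (Oikonomou–Symvonis):
every vertex `u` has an angle range `⟨a1 u, a2 u⟩ ⊆ [0, π]` strictly containing the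
slopes of all edges of `T_u` and of the edge entering `u`, children ranges are nested
in the parent's, and sibling ranges are disjoint except possibly at their boundaries. -/
def NonStrictlySlopeDisjoint {V : Type*} (T : RTree V) (D : V → Pt) : Prop :=
  ∃ a1 a2 : V → ℝ,
    (∀ u : V, 0 ≤ a1 u ∧ a1 u < a2 u ∧ a2 u ≤ Real.pi) ∧
    (∀ u w : V, w ≠ T.root → T.Anc u w →
      a1 u < slopeAngle (D (T.parent w)) (D w) ∧
      slopeAngle (D (T.parent w)) (D w) < a2 u) ∧
    (∀ v : V, v ≠ T.root → a1 (T.parent v) ≤ a1 v ∧ a2 v ≤ a2 (T.parent v)) ∧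
    (∀ u1 u2 : V, u1 ≠ T.root → u2 ≠ T.root → u1 ≠ u2 → T.parent u1 = T.parent u2 →
      a2 u1 ≤ a1 u2 ∨ a2 u2 ≤ a1 u1)

/-- The set of direction angles of the edges incident to `u`, oriented away from `u`. -/
def edgeDirs {V : Type*} (T : RTree V) (D : V → Pt) (u : V) : Set ℝ :=
  {θ | ∃ w : V, T.TAdj u w ∧ θ = slopeAngle (D u) (D w)}

/-- Directions `θ1 ≠ θ2` of edges at `u` are consecutive (in counterclockwise order)
if no other edge direction at `u` lies strictly between them; the angle of the
corresponding wedge is `ccwGap θ1 θ2`. -/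
def ConsecutiveAt {V : Type*} (T : RTree V) (D : V → Pt) (u : V) (θ1 θ2 : ℝ) : Prop :=
  θ1 ∈ edgeDirs T D u ∧ θ2 ∈ edgeDirs T D u ∧ θ1 ≠ θ2 ∧
    ∀ θ ∈ edgeDirs T D u, θ = θ1 ∨ θ = θ2 ∨
      ¬ (0 < ccwGap θ1 θ ∧ ccwGap θ1 θ < ccwGap θ1 θ2)

/-- Near-convex drawing: monotone, and every pair of consecutive edges incident to a
common vertex forms a convex angle (an angle in `(0, π]`), with the exception of at
most a single pair of consecutive edges incident to the root. -/
def NearConvex {V : Type*} (T : RTree V) (D : V → Pt) : Prop :=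
  MonotoneTreeDrawing T D ∧
  ∃ b1 b2 : ℝ, ∀ u θ1 θ2, ConsecutiveAt T D u θ1 θ2 →
    ccwGap θ1 θ2 ≤ Real.pi ∨ (u = T.root ∧ θ1 = b1 ∧ θ2 = b2)

/-- A planar straight-line drawing of the tree: two distinct edge segments meet only
at the image of a shared endpoint. -/
def PlanarTreeDrawing {V : Type*} (T : RTree V) (D : V → Pt) : Prop :=
  ∀ b d : V, b ≠ T.root → d ≠ T.root → b ≠ d →
    ∀ p : Pt, p ∈ segment ℝ (D (T.parent b)) (D b) → p ∈ segment ℝ (D (T.parent d)) (D d) →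
      ∃ w : V, (w = T.parent b ∨ w = b) ∧ (w = T.parent d ∨ w = d) ∧ p = D w

/-- The `lam`-elongation of the tree edge `(parent u, u)`: the drawing of the subtree
`T_u` is translated along the direction of the edge so that the length of the edge
increases by `lam` times the length of the reference vector of `u`. -/
noncomputable def elongate {V : Type*} (T : RTree V) (D : V → Pt) (u : V) (lam : ℕ) :
    V → Pt := fun v =>
  haveI := Classical.dec (T.Anc u v)
  if T.Anc u v then D v + (lam : ℝ) • (D u - D (T.parent u)) else D v
/-- A plane graph: a simple graph together with a (straight-line) planar embedding,
given by positions for the vertices; edges are drawn as straight-line segments.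
(By Fáry's theorem this entails no loss of generality for plane graphs.) -/
structure PlaneGraph (V : Type*) where
  G : SimpleGraph V
  pos : V → Pt
  pos_inj : Function.Injective pos

namespace PlaneGraph

variable {V : Type*}

/-- The straight-line segment drawn for the unordered pair `e` under the placement `D`. -/
def segOf (D : V → Pt) (e : Sym2 V) : Set Pt :=
  {p | ∃ a b : V, e = s(a, b) ∧ p ∈ segment ℝ (D a) (D b)}

/-- The family of edges `E` is drawn planarly by the placement `D`: two distinct edge
segments meet only at the image of a common endpoint, and no vertex lies on an edge
segment other than at its endpoints. -/
def PlanarOn (D : V → Pt) (E : Set (Sym2 V)) : Prop :=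
  (∀ e1 ∈ E, ∀ e2 ∈ E, e1 ≠ e2 →
    ∀ p : Pt, p ∈ segOf D e1 → p ∈ segOf D e2 → ∃ w : V, w ∈ e1 ∧ w ∈ e2 ∧ p = D w) ∧
  (∀ e ∈ E, ∀ w : V, D w ∈ segOf D e → w ∈ e)

/-- The embedding of a plane graph is planar. -/
def IsPlane (P : PlaneGraph V) : Prop := PlanarOn P.pos P.G.edgeSet

/-- The union of all drawn edges of the plane graph. -/
def edgeUnion (P : PlaneGraph V) : Set Pt := ⋃ e ∈ P.G.edgeSet, segOf P.pos e

/-- The outer face: the union of the unbounded connected components of the complement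
of the drawing. -/
def outerRegion (P : PlaneGraph V) : Set Pt :=
  {p | p ∉ P.edgeUnion ∧ ¬ Bornology.IsBounded (connectedComponentIn P.edgeUnionᶜ p)}

/-- A vertex lying on the boundary of the outer face. -/
def IsOuterVertex (P : PlaneGraph V) (v : V) : Prop := P.pos v ∈ closure P.outerRegion

/-- An inner vertex: one not lying on the boundary of the outer face. -/
def IsInnerVertex (P : PlaneGraph V) (v : V) : Prop := ¬ P.IsOuterVertex v

/-- A plane graph is `k`-inner if it has at most `k` inner vertices. -/
def KInner (P : PlaneGraph V) (k : ℕ) : Prop := {v | P.IsInnerVertex v}.ncard ≤ k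

end PlaneGraph

/-- A monotone drawing of a graph: every pair of vertices is connected by a path whose
orthogonal projections on some line appear in path order. -/
def MonotoneGraphDrawing {V : Type*} (G : SimpleGraph V) (D : V → Pt) : Prop :=
  ∀ u v : V, ∃ (p : List V) (d : Pt), d ≠ 0 ∧
    p.head? = some u ∧ p.getLast? = some v ∧
    p.Chain' G.Adj ∧
    (p.map fun w => d.1 * (D w).1 + d.2 * (D w).2).Chain' (· < ·)

/-- A spanning tree of (the graph of) a plane graph `P`, rooted at some vertex. -/
structure SpanningTree {V : Type*} (P : PlaneGraph V) where
  tree : RTree V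
  adj_parent : ∀ v : V, v ≠ tree.root → P.G.Adj (tree.parent v) v

/-- A non-tree edge of `P` with respect to the tree `T`. -/
def IsNonTreeEdge {V : Type*} (P : PlaneGraph V) (T : RTree V) (e : Sym2 V) : Prop :=
  e ∈ P.G.edgeSet ∧ ¬ T.IsTreeEdge e

/-- Clockwise angle at `u` of the edge towards `w`, measured starting from the reference
direction at `u`: the direction from `u` towards its parent (or the reference direction
`rootRef` if `u` is the root). This realizes the clockwise order of the edges incident
to `u`, starting from the edge entering `u` from its parent. -/
noncomputable def cwAngle {V : Type*} (P : PlaneGraph V) (T : RTree V) (rootRef : ℝ)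
    (u w : V) : ℝ :=
  haveI := Classical.dec (u = T.root)
  ccwGap (slopeAngle (P.pos u) (P.pos w))
    (if u = T.root then rootRef else slopeAngle (P.pos u) (P.pos (T.parent u)))

/-- Condition (c) of C2, for `X_v`: the non-tree edge `(v,v')` leads into the subtree
rooted at a left-group child `x` of a strict ancestor `u` of `v` (with `c` the child of
`u` on the tree path from the root to `v`). -/
def XCond {V : Type*} (P : PlaneGraph V) (T : RTree V) (rootRef : ℝ) (v v' : V) : Prop :=
  ∃ u c x : V, T.Anc u v ∧ u ≠ v ∧
    T.parent c = u ∧ c ≠ u ∧ T.Anc c v ∧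
    T.parent x = u ∧ x ≠ u ∧ x ≠ c ∧
    cwAngle P T rootRef u x < cwAngle P T rootRef u c ∧ T.Anc x v'

/-- Condition (c) of C2, for `Z_v`: the non-tree edge `(v,v')` leads into the subtree
rooted at a right-group child `x` of a strict ancestor `u` of `v`. -/
def ZCond {V : Type*} (P : PlaneGraph V) (T : RTree V) (rootRef : ℝ) (v v' : V) : Prop :=
  ∃ u c x : V, T.Anc u v ∧ u ≠ v ∧
    T.parent c = u ∧ c ≠ u ∧ T.Anc c v ∧
    T.parent x = u ∧ x ≠ u ∧ x ≠ c ∧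
    cwAngle P T rootRef u c < cwAngle P T rootRef u x ∧ T.Anc x v'

/-- A good spanning tree (Hossain–Rahman) of a plane graph `P`: an ordered spanning
tree rooted at a vertex on the outer face boundary such that every vertex `v ≠ root`
satisfies conditions C1 and C2. -/
structure GoodSpanningTree {V : Type*} (P : PlaneGraph V) where
  spanning : SpanningTree P
  rootRef : ℝ
  root_outer : P.IsOuterVertex spanning.tree.root
  /-- C1: no non-tree edge joins `v` to a strict ancestor of `v`. -/
  C1 : ∀ v w : V, P.G.Adj v w → spanning.tree.Anc w v → w ≠ v →
    w = spanning.tree.parent v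
  /-- C2: at every vertex `v ≠ root` the incident edges other than the one from the
  parent split, in clockwise order after the parent edge, into the non-tree edges
  `X_v` (towards left-group subtrees), the tree edges `Y_v`, and the non-tree edges
  `Z_v` (towards right-group subtrees). -/
  C2 : ∃ isX isZ : V → V → Prop, ∀ v : V, v ≠ spanning.tree.root →
    (∀ w : V, P.G.Adj v w → w ≠ spanning.tree.parent v → spanning.tree.parent w ≠ v →
      (isX v w ∨ isZ v w) ∧ ¬ (isX v w ∧ isZ v w) ∧
      (isX v w → XCond P spanning.tree rootRef v w) ∧
      (isZ v w → ZCond P spanning.tree rootRef v w)) ∧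
    (∀ wx wy : V, isX v wx → spanning.tree.parent wy = v → wy ≠ v →
      cwAngle P spanning.tree rootRef v wx < cwAngle P spanning.tree rootRef v wy) ∧
    (∀ wy wz : V, spanning.tree.parent wy = v → wy ≠ v → isZ v wz →
      cwAngle P spanning.tree rootRef v wy < cwAngle P spanning.tree rootRef v wz) ∧
    (∀ wx wz : V, isX v wx → isZ v wz →
      cwAngle P spanning.tree rootRef v wx < cwAngle P spanning.tree rootRef v wz)

/-- `w` lies on the tree path between `u` and `v`, as the lower endpoint of a path
edge `(parent w, w)`: it is an ancestor of exactly one of `u`, `v`. -/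
def onTreePath {V : Type*} (T : RTree V) (u v w : V) : Prop :=
  w ≠ T.root ∧ ((T.Anc w u ∧ ¬ T.Anc w v) ∨ (T.Anc w v ∧ ¬ T.Anc w u))

/-- The drawn cycle formed by the (non-tree) edge `(u,v)` together with the tree edges
on the tree path between `u` and `v`. -/
def cycleSet {V : Type*} (D : V → Pt) (T : RTree V) (u v : V) : Set Pt :=
  segment ℝ (D u) (D v) ∪
    ⋃ w ∈ {w : V | onTreePath T u v w}, segment ℝ (D (T.parent w)) (D w)

/-- The point `p` lies strictly inside the cycle formed by the edge `(u,v)` and tree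
edges: it avoids the cycle and its connected component in the complement is bounded. -/
def CoversPt {V : Type*} (D : V → Pt) (T : RTree V) (u v : V) (p : Pt) : Prop :=
  p ∉ cycleSet D T u v ∧
    Bornology.IsBounded (connectedComponentIn (cycleSet D T u v)ᶜ p)

/-- The edge `(u,v)` covers the vertex `w`. -/
def Covers {V : Type*} (P : PlaneGraph V) (T : RTree V) (u v w : V) : Prop :=
  CoversPt P.pos T u v (P.pos w)

/-- `C(e)`: the set of leaves of `T` covered by the edge `e`. -/
def coveredLeaves {V : Type*} (P : PlaneGraph V) (T : RTree V) (e : Sym2 V) : Set V :=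
  {w | T.IsLeaf w ∧ ∃ u v : V, e = s(u, v) ∧ Covers P T u v w}

/-- The edge `e'` lies in (the closed region bounded by) the cycle induced by the
tree edges and the edge `e`. -/
def InsideCycle {V : Type*} (P : PlaneGraph V) (T : RTree V) (e e' : Sym2 V) : Prop :=
  ∃ u v : V, e = s(u, v) ∧
    ∀ p ∈ PlaneGraph.segOf P.pos e', p ∉ cycleSet P.pos T u v →
      Bornology.IsBounded (connectedComponentIn (cycleSet P.pos T u v)ᶜ p)

/-- A leader edge: a non-tree edge `e` with `C(e) ≠ ∅` such that no other non-tree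
edge `e'` with `C(e') = C(e)` lies inside the cycle induced by the tree edges and `e`. -/
def IsLeaderEdge {V : Type*} (P : PlaneGraph V) (T : RTree V) (e : Sym2 V) : Prop :=
  IsNonTreeEdge P T e ∧ (coveredLeaves P T e).Nonempty ∧
    ¬ ∃ e' : Sym2 V, IsNonTreeEdge P T e' ∧ e' ≠ e ∧
      coveredLeaves P T e' = coveredLeaves P T e ∧ InsideCycle P T e e'

/-- The dependency relation between leader edges: `e1` must be inserted before `e2`. -/
def LeaderDep {V : Type*} (P : PlaneGraph V) (T : RTree V) (e1 e2 : Sym2 V) : Prop :=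
  coveredLeaves P T e1 ⊂ coveredLeaves P T e2 ∨
    ∃ a b : V, a ∈ e1 ∧ b ∈ e2 ∧ a ≠ b ∧ T.Anc a b

/-! A covered vertex lies in a bounded component of the complement of a cycle of `G`. An outer
vertex is a limit of points of the outer face, whose components in the complement of the whole
drawing are unbounded; near the vertex these points lie in the vertex's own component in the
complement of the (closed) cycle, which contains their unbounded components. -/

theorem not_isBounded_connectedComponentIn_of_mem_closure {X : Type*} [TopologicalSpace X]
    [LocallyConnectedSpace X] [Bornology X] {C E : Set X} {x : X} (hC : IsClosed C)
    (hCE : C ⊆ E) (hx : x ∉ C)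
    (hxE : x ∈ closure {q | ¬ Bornology.IsBounded (connectedComponentIn Eᶜ q)}) :
    ¬ Bornology.IsBounded (connectedComponentIn Cᶜ x) := by
  obtain ⟨q, hqx, hq⟩ := mem_closure_iff_nhds.1 hxE _
    (hC.isOpen_compl.connectedComponentIn.mem_nhds (mem_connectedComponentIn hx))
  rw [connectedComponentIn_eq hqx]
  exact fun hbdd => hq (hbdd.subset (connectedComponentIn_mono q (Set.compl_subset_compl.2 hCE)))

theorem isClosed_cycleSet {V : Type*} [Finite V] (D : V → Pt) (T : RTree V) (u v : V) :
    IsClosed (cycleSet D T u v) := by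
  have isClosed_segment (x y : Pt) : IsClosed (segment ℝ x y) := by
    rw [← convexHull_pair]
    exact ((Set.toFinite _).isCompact_convexHull ℝ).isClosed
  exact (isClosed_segment _ _).union <|
    (Set.toFinite _).isClosed_biUnion fun w _ => isClosed_segment _ _

namespace PlaneGraph

variable {V : Type*} (P : PlaneGraph V)

theorem cycleSet_subset_edgeUnion (T : SpanningTree P) {u v : V} (huv : P.G.Adj u v) :
    cycleSet P.pos T.tree u v ⊆ P.edgeUnion := by
  rintro p (hp | hp)
  · exact Set.mem_biUnion huv ⟨u, v, rfl, hp⟩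
  · obtain ⟨w, hw, hp⟩ := Set.mem_iUnion₂.1 hp
    exact Set.mem_biUnion (T.adj_parent w hw.1) ⟨_, _, rfl, hp⟩

theorem not_covers_of_isOuterVertex [Finite V] (T : SpanningTree P) {u v w : V}
    (hw : P.IsOuterVertex w) (huv : P.G.Adj u v) : ¬ Covers P T.tree u v w := fun ⟨hwC, hbdd⟩ =>
  not_isBounded_connectedComponentIn_of_mem_closure (isClosed_cycleSet _ _ u v)
    (P.cycleSet_subset_edgeUnion T huv) hwC (closure_mono (fun _ hq => hq.2) hw) hbdd

theorem coveredLeaves_subset_innerVertices [Finite V] (T : SpanningTree P) {e : Sym2 V}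
    (he : e ∈ P.G.edgeSet) : coveredLeaves P T.tree e ⊆ {w | P.IsInnerVertex w} := by
  rintro w ⟨-, u, v, rfl, hcov⟩ hw
  exact P.not_covers_of_isOuterVertex T hw he hcov

end PlaneGraph

theorem covered_leaves_are_inner_general {V : Type*} [Fintype V] (P : PlaneGraph V)
    (k : ℕ) (hk : P.KInner k) (T : GoodSpanningTree P) :
    (∀ w : V, P.IsOuterVertex w → T.spanning.tree.IsLeaf w →
      ∀ u v : V, P.G.Adj u v → ¬ Covers P T.spanning.tree u v w) ∧
    (∀ e : Sym2 V, IsNonTreeEdge P T.spanning.tree e →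
      (∀ w ∈ coveredLeaves P T.spanning.tree e, P.IsInnerVertex w) ∧
      (coveredLeaves P T.spanning.tree e).ncard ≤ k) := by
  refine ⟨fun w hw _ u v huv => P.not_covers_of_isOuterVertex T.spanning hw huv, fun e he => ?_⟩
  have hinner := P.coveredLeaves_subset_innerVertices T.spanning he.1
  exact ⟨hinner, (Set.ncard_le_ncard hinner (Set.toFinite _)).trans hk⟩

/-- In a `k`-inner plane graph with a good spanning tree `T`, a
vertex on the outer face boundary that is a leaf of `T` is not covered by any edge of
`G`; consequently, for every non-tree edge `e`, `C(e)` consists of inner vertices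
only, and `|C(e)| ≤ k`. -/
theorem covered_leaves_are_inner {V : Type*} [Fintype V] (P : PlaneGraph V)
    (hP : P.IsPlane) (k : ℕ) (hk : P.KInner k) (T : GoodSpanningTree P) :
    (∀ w : V, P.IsOuterVertex w → T.spanning.tree.IsLeaf w →
      ∀ u v : V, P.G.Adj u v → ¬ Covers P T.spanning.tree u v w) ∧
    (∀ e : Sym2 V, IsNonTreeEdge P T.spanning.tree e →
      (∀ w ∈ coveredLeaves P T.spanning.tree e, P.IsInnerVertex w) ∧
      (coveredLeaves P T.spanning.tree e).ncard ≤ k) :=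
  covered_leaves_are_inner_general P k hk T
end

section
/- Every non-strictly slope-disjoint straight-line drawing of a rooted tree is a monotone drawing. -/
open scoped Real

/-!
Let `t` be the lowest common ancestor of `u` and `v`. The tree path from `u` to `v` climbs from
`u` to `t` inside the subtree `T_{c₁}` of a child `c₁` of `t` and then descends to `v` inside the
subtree `T_{c₂}` of another child `c₂` (either leg may be empty). If `a₂(c₁) ≤ a₁(c₂) =: φ`, the
slopes of the descending leg lie in `(φ, φ + π)` and those of the climbing leg in `(φ - π, φ)`,
so the projection on the normal `(-sin φ, cos φ)` strictly increases along the path; the case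
`a₂(c₂) ≤ a₁(c₁)` follows by exchanging `u` and `v`.
-/

open Relation (ReflTransGen reflTransGen_swap)

namespace RTree

variable {V : Type*} (T : RTree V)

lemma anc_refl (u : V) : T.Anc u u := ⟨0, rfl⟩

lemma anc_parent (u : V) : T.Anc (T.parent u) u := ⟨1, rfl⟩

lemma anc_root (u : V) : T.Anc T.root u := T.reaches_root u

variable {T}

lemma Anc.trans {a b c : V} (hab : T.Anc a b) (hbc : T.Anc b c) : T.Anc a c := by
  obtain ⟨m, rfl⟩ := hab
  obtain ⟨n, rfl⟩ := hbc
  exact ⟨m + n, Function.iterate_add_apply _ _ _ _⟩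

lemma Anc.ne_root {c w : V} (h : T.Anc c w) (hc : c ≠ T.root) : w ≠ T.root := by
  rintro rfl
  obtain ⟨n, rfl⟩ := h
  exact hc (Function.iterate_fixed T.parent_root n)

lemma TAdj.symm {a b : V} (h : T.TAdj a b) : T.TAdj b a := ⟨h.1.symm, h.2.symm⟩

lemma Anc.exists_child {u v : V} (h : T.Anc u v) (hne : u ≠ v) :
    ∃ c, c ≠ T.root ∧ T.parent c = u ∧ T.Anc c v := by
  obtain ⟨n, hn⟩ := h
  induction n generalizing v with
  | zero => exact absurd hn.symm hne
  | succ n ih =>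
    by_cases hpv : T.parent v = u
    · refine ⟨v, ?_, hpv, T.anc_refl v⟩
      rintro rfl
      exact hne (by rw [← hpv, T.parent_root])
    · obtain ⟨c, hc, hcu, hcv⟩ := ih (Ne.symm hpv) hn
      exact ⟨c, hc, hcu, hcv.trans (T.anc_parent v)⟩

lemma anc_or_anc_or_exists_siblings (u v : V) :
    T.Anc u v ∨ T.Anc v u ∨ ∃ c₁ c₂, c₁ ≠ T.root ∧ c₂ ≠ T.root ∧ c₁ ≠ c₂ ∧
      T.parent c₁ = T.parent c₂ ∧ T.Anc c₁ u ∧ T.Anc c₂ v := by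
  obtain ⟨n, hn⟩ := T.reaches_root u
  induction n generalizing u with
  | zero =>
    obtain rfl : u = T.root := hn
    exact Or.inl (T.anc_root v)
  | succ n ih =>
    by_cases huv : T.Anc u v
    · exact Or.inl huv
    have hu : u ≠ T.root := fun h => huv (h ▸ T.anc_root v)
    rcases ih (T.parent u) hn with hpv | hvp | ⟨c₁, c₂, hc₁, hc₂, hne, hpar, hpu, hv⟩
    · by_cases hvp : T.parent u = v
      · exact Or.inr (Or.inl (hvp ▸ T.anc_parent u))
      obtain ⟨c, hc, hcp, hcv⟩ := hpv.exists_child hvp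
      exact Or.inr (Or.inr
        ⟨u, c, hu, hc, fun h => huv (h ▸ hcv), hcp.symm, T.anc_refl u, hcv⟩)
    · exact Or.inr (Or.inl (hvp.trans (T.anc_parent u)))
    · exact Or.inr (Or.inr ⟨c₁, c₂, hc₁, hc₂, hne, hpar, hpu.trans (T.anc_parent u), hv⟩)

lemma Anc.reflTransGen_climb {r : V → V → Prop} {c u : V}
    (h : ∀ w, T.Anc c w → r w (T.parent w)) (hu : T.Anc c u) :
    ReflTransGen r u (T.parent c) := by
  obtain ⟨n, hn⟩ := hu
  induction n generalizing u with
  | zero =>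
    subst hn
    exact .single (h u (T.anc_refl u))
  | succ n ih => exact .head (h u ⟨n + 1, hn⟩) (ih hn)

lemma Anc.reflTransGen_descend {r : V → V → Prop} {c v : V}
    (h : ∀ w, T.Anc c w → r (T.parent w) w) (hv : T.Anc c v) :
    ReflTransGen r (T.parent c) v :=
  reflTransGen_swap.1 (hv.reflTransGen_climb (r := Function.swap r) h)

end RTree

def proj (d p : Pt) : ℝ := d.1 * p.1 + d.2 * p.2

noncomputable def normalDir (φ : ℝ) : Pt := (-Real.sin φ, Real.cos φ)

lemma normalDir_ne_zero (φ : ℝ) : normalDir φ ≠ 0 := by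
  intro h
  have hsin : Real.sin φ = 0 := by simpa [normalDir] using congrArg Prod.fst h
  have hcos : Real.cos φ = 0 := congrArg Prod.snd h
  simpa [hsin, hcos] using Real.sin_sq_add_cos_sq φ

lemma proj_normalDir_sub_proj (P Q : Pt) (φ : ℝ) :
    proj (normalDir φ) Q - proj (normalDir φ) P =
      ‖(⟨Q.1 - P.1, Q.2 - P.2⟩ : ℂ)‖ * Real.sin (slopeAngle P Q - φ) := by
  set z : ℂ := ⟨Q.1 - P.1, Q.2 - P.2⟩
  have hsin : Real.sin (slopeAngle P Q - φ) = Real.sin (z.arg - φ) := by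
    unfold slopeAngle
    split_ifs
    · rw [show z.arg + 2 * π - φ = z.arg - φ + 2 * π by ring, Real.sin_add_two_pi]
    · rfl
  have hre : ‖z‖ * Real.cos z.arg = Q.1 - P.1 := Complex.norm_mul_cos_arg z
  have him : ‖z‖ * Real.sin z.arg = Q.2 - P.2 := Complex.norm_mul_sin_arg z
  rw [hsin, Real.sin_sub]
  simp only [proj, normalDir]
  linear_combination Real.sin φ * hre - Real.cos φ * him

lemma norm_pos_of_slopeAngle_pos {P Q : Pt} (h : 0 < slopeAngle P Q) :
    0 < ‖(⟨Q.1 - P.1, Q.2 - P.2⟩ : ℂ)‖ := by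
  refine norm_pos_iff.2 fun hz => ?_
  rw [slopeAngle, hz] at h
  simp at h

section MonotonePaths

variable {V : Type*} {T : RTree V} {D : V → Pt}

def MonotoneStep (T : RTree V) (D : V → Pt) (d : Pt) (a b : V) : Prop :=
  T.TAdj a b ∧ proj d (D a) < proj d (D b)

def HasMonotonePath (T : RTree V) (D : V → Pt) (u v : V) : Prop :=
  ∃ d : Pt, d ≠ 0 ∧ ReflTransGen (MonotoneStep T D d) u v

lemma HasMonotonePath.symm {u v : V} (h : HasMonotonePath T D u v) :
    HasMonotonePath T D v u := by
  obtain ⟨d, hd, hp⟩ := h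
  refine ⟨-d, neg_ne_zero.2 hd, ReflTransGen.mono (fun a b hab => ⟨hab.1.symm, ?_⟩) _ _
    (reflTransGen_swap.2 hp)⟩
  have := hab.2
  simp only [proj, Prod.fst_neg, Prod.snd_neg] at this ⊢
  linarith

lemma monotoneTreeDrawing_of_forall_hasMonotonePath (h : ∀ u v, HasMonotonePath T D u v) :
    MonotoneTreeDrawing T D := by
  intro u v
  obtain ⟨d, hd, hp⟩ := h u v
  obtain ⟨l, hl, hchain, hhead, hlast⟩ := List.exists_isChain_ne_nil_of_relationReflTransGen hp
  exact ⟨l, d, hd, hhead ▸ List.head?_eq_some_head hl, hlast ▸ List.getLast?_eq_some_getLast hl,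
    hchain.imp fun _ _ h => h.1, (List.isChain_map _).2 (hchain.imp fun _ _ h => h.2)⟩

lemma monotoneStep_parent_of_sin_pos {φ : ℝ} {w : V}
    (hθ : 0 < slopeAngle (D (T.parent w)) (D w))
    (hsin : 0 < Real.sin (slopeAngle (D (T.parent w)) (D w) - φ)) :
    MonotoneStep T D (normalDir φ) (T.parent w) w := by
  have hlt : proj (normalDir φ) (D (T.parent w)) < proj (normalDir φ) (D w) := by
    rw [← sub_pos, proj_normalDir_sub_proj]
    exact mul_pos (norm_pos_of_slopeAngle_pos hθ) hsin
  exact ⟨⟨fun he => hlt.ne (by rw [he]), Or.inr rfl⟩, hlt⟩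

lemma monotoneStep_of_sin_neg {φ : ℝ} {w : V}
    (hθ : 0 < slopeAngle (D (T.parent w)) (D w))
    (hsin : Real.sin (slopeAngle (D (T.parent w)) (D w) - φ) < 0) :
    MonotoneStep T D (normalDir φ) w (T.parent w) := by
  have hlt : proj (normalDir φ) (D w) < proj (normalDir φ) (D (T.parent w)) := by
    rw [← sub_neg, proj_normalDir_sub_proj]
    exact mul_neg_of_pos_of_neg (norm_pos_of_slopeAngle_pos hθ) hsin
  exact ⟨⟨fun he => hlt.ne (by rw [← he]), Or.inl rfl⟩, hlt⟩

lemma reflTransGen_monotoneStep_descend {φ : ℝ} {c v : V}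
    (h : ∀ w, T.Anc c w → 0 < slopeAngle (D (T.parent w)) (D w) ∧
      φ < slopeAngle (D (T.parent w)) (D w) ∧ slopeAngle (D (T.parent w)) (D w) < φ + π)
    (hv : T.Anc c v) :
    ReflTransGen (MonotoneStep T D (normalDir φ)) (T.parent c) v :=
  hv.reflTransGen_descend fun w hw =>
    have ⟨hθ, hlo, hhi⟩ := h w hw
    monotoneStep_parent_of_sin_pos hθ (Real.sin_pos_of_pos_of_lt_pi (by linarith) (by linarith))

lemma reflTransGen_monotoneStep_climb {φ : ℝ} {c u : V}
    (h : ∀ w, T.Anc c w → 0 < slopeAngle (D (T.parent w)) (D w) ∧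
      φ - π < slopeAngle (D (T.parent w)) (D w) ∧ slopeAngle (D (T.parent w)) (D w) < φ)
    (hu : T.Anc c u) :
    ReflTransGen (MonotoneStep T D (normalDir φ)) u (T.parent c) :=
  hu.reflTransGen_climb fun w hw =>
    have ⟨hθ, hlo, hhi⟩ := h w hw
    monotoneStep_of_sin_neg hθ (Real.sin_neg_of_neg_of_neg_pi_lt (by linarith) (by linarith))

lemma hasMonotonePath_of_anc {a1 a2 : V → ℝ}
    (hrange : ∀ u : V, 0 ≤ a1 u ∧ a1 u < a2 u ∧ a2 u ≤ π)
    (hslope : ∀ u w : V, w ≠ T.root → T.Anc u w →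
      a1 u < slopeAngle (D (T.parent w)) (D w) ∧ slopeAngle (D (T.parent w)) (D w) < a2 u)
    {u v : V} (h : T.Anc u v) : HasMonotonePath T D u v := by
  obtain rfl | hne := eq_or_ne u v
  · exact ⟨normalDir 0, normalDir_ne_zero 0, .refl⟩
  obtain ⟨c, hc, rfl, hcv⟩ := h.exists_child hne
  refine ⟨normalDir (a1 c), normalDir_ne_zero _,
    reflTransGen_monotoneStep_descend (fun w hw => ?_) hcv⟩
  obtain ⟨hlo, hhi⟩ := hslope c w (hw.ne_root hc) hw
  obtain ⟨h0, -, hπ⟩ := hrange c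
  exact ⟨by linarith, hlo, by linarith⟩

lemma hasMonotonePath_of_siblings {a1 a2 : V → ℝ}
    (hrange : ∀ u : V, 0 ≤ a1 u ∧ a1 u < a2 u ∧ a2 u ≤ π)
    (hslope : ∀ u w : V, w ≠ T.root → T.Anc u w →
      a1 u < slopeAngle (D (T.parent w)) (D w) ∧ slopeAngle (D (T.parent w)) (D w) < a2 u)
    {c₁ c₂ u v : V} (hc₁ : c₁ ≠ T.root) (hc₂ : c₂ ≠ T.root) (hpar : T.parent c₁ = T.parent c₂)
    (hle : a2 c₁ ≤ a1 c₂) (hu : T.Anc c₁ u) (hv : T.Anc c₂ v) : HasMonotonePath T D u v := by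
  have hclimb : ReflTransGen (MonotoneStep T D (normalDir (a1 c₂))) u (T.parent c₁) := by
    refine reflTransGen_monotoneStep_climb (fun w hw => ?_) hu
    obtain ⟨hlo, hhi⟩ := hslope c₁ w (hw.ne_root hc₁) hw
    obtain ⟨h0, -, -⟩ := hrange c₁
    obtain ⟨-, h12, hπ⟩ := hrange c₂
    exact ⟨by linarith, by linarith, by linarith⟩
  have hdescend : ReflTransGen (MonotoneStep T D (normalDir (a1 c₂))) (T.parent c₂) v := by
    refine reflTransGen_monotoneStep_descend (fun w hw => ?_) hv
    obtain ⟨hlo, hhi⟩ := hslope c₂ w (hw.ne_root hc₂) hw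
    obtain ⟨h0, -, hπ⟩ := hrange c₂
    exact ⟨by linarith, hlo, by linarith⟩
  exact ⟨normalDir (a1 c₂), normalDir_ne_zero _, hclimb.trans (hpar ▸ hdescend)⟩

end MonotonePaths

theorem nonStrictlySlopeDisjoint_monotone_general {V : Type*} (T : RTree V) (D : V → Pt)
    (h : NonStrictlySlopeDisjoint T D) :
    MonotoneTreeDrawing T D := by
  obtain ⟨a1, a2, hrange, hslope, -, hsiblings⟩ := h
  refine monotoneTreeDrawing_of_forall_hasMonotonePath fun u v => ?_
  rcases T.anc_or_anc_or_exists_siblings u v with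
    huv | hvu | ⟨c₁, c₂, hc₁, hc₂, hne, hpar, hu, hv⟩
  · exact hasMonotonePath_of_anc hrange hslope huv
  · exact (hasMonotonePath_of_anc hrange hslope hvu).symm
  · rcases hsiblings c₁ c₂ hc₁ hc₂ hne hpar with hle | hle
    · exact hasMonotonePath_of_siblings hrange hslope hc₁ hc₂ hpar hle hu hv
    · exact (hasMonotonePath_of_siblings hrange hslope hc₂ hc₁ hpar.symm hle hv hu).symm

/-- Every non-strictly slope-disjoint straight-line drawing of a
rooted tree is a monotone drawing. -/
theorem nonStrictlySlopeDisjoint_monotone {V : Type*} (T : RTree V) (D : V → Pt)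
    (hinj : Function.Injective D) (h : NonStrictlySlopeDisjoint T D) :
    MonotoneTreeDrawing T D :=
  nonStrictlySlopeDisjoint_monotone_general T D h
end

section
/- Let Γ be a straight-line drawing of a rooted tree T that is monotone, near-convex and non-strictly slope-disjoint, and let (p^u,u) be a tree edge with λ ∈ ℕ. Then the drawing obtained from Γ by the λ-elongation of edge (p^u,u) is again monotone, near-convex and non-strictly slope-disjoint (in particular, it remains planar). -/
open scoped Real

/-!
Elongating the edge `(parent u, u)` translates the subtree `T_u` rigidly, so every edge
vector of the tree is multiplied by a positive factor (`1 + λ` for the edge entering `u`,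
`1` for all others). Edge slopes, and the sign of the projection of every edge on any
fixed line, are therefore unchanged; monotonicity, near-convexity and slope-disjointness
only depend on these.

Planarity follows from slope-disjointness: the drawing of a subtree `T_c` lies in the
open sector of apex `parent c` spanned by the angle range of `c`. Sibling sectors are
disjoint, and all sectors open upwards, while the edge entering the apex comes from
below.
-/

open Set Real

theorem List.IsChain.and {α : Type*} {R S : α → α → Prop} {l : List α}
    (hR : l.IsChain R) (hS : l.IsChain S) : l.IsChain fun a b => R a b ∧ S a b := by
  induction hR with
  | nil => exact .nil
  | singleton => exact .singleton _
  | cons_cons hab _ ih =>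
    rw [List.isChain_cons_cons] at hS
    exact .cons_cons ⟨hab, hS.1⟩ (ih hS.2)

namespace RTree

variable {V : Type*} {T : RTree V} {u v w : V}

theorem anc_refl_s14 (T : RTree V) (v : V) : T.Anc v v := ⟨0, rfl⟩

theorem Anc.of_parent (h : T.Anc u (T.parent w)) : T.Anc u w := by
  obtain ⟨n, hn⟩ := h
  exact ⟨n + 1, hn⟩

theorem Anc.parent_of_ne (h : T.Anc u w) (hne : w ≠ u) : T.Anc u (T.parent w) := by
  obtain ⟨_ | n, hn⟩ := h
  · exact absurd hn hne
  · exact ⟨n, hn⟩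

theorem eq_root_of_anc_root (h : T.Anc u T.root) : u = T.root := by
  obtain ⟨n, hn⟩ := h
  rw [← hn, Function.iterate_fixed T.parent_root]

theorem ne_root_of_parent_ne (h : T.parent v ≠ v) : v ≠ T.root := by
  rintro rfl
  exact h T.parent_root

@[elab_as_elim]
theorem Anc.induction_on {c : V} {P : V → Prop} (h : T.Anc c w) (base : P c)
    (step : ∀ w, w ≠ c → T.Anc c (T.parent w) → P (T.parent w) → P w) : P w := by
  obtain ⟨n, hn⟩ := h
  induction n generalizing w with
  | zero =>
    obtain rfl : w = c := hn
    exact base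
  | succ n ih =>
    by_cases hwc : w = c
    · exact hwc ▸ base
    · exact step w hwc ⟨n, hn⟩ (ih hn)

theorem exists_child_anc_of_anc (h : T.Anc v w) (hne : w ≠ v) :
    ∃ c, T.parent c = v ∧ c ≠ v ∧ T.Anc c w := by
  obtain ⟨n, hn⟩ := h
  induction n generalizing w with
  | zero => exact absurd hn hne
  | succ n ih =>
    by_cases hpw : T.parent w = v
    · exact ⟨w, hpw, hne, anc_refl_s14 T w⟩
    · obtain ⟨c, hcv, hc, hcw⟩ := ih hpw hn
      exact ⟨c, hcv, hc, hcw.of_parent⟩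

theorem exists_siblings_of_not_anc (hvw : ¬ T.Anc v w) (hwv : ¬ T.Anc w v) :
    ∃ c₁ c₂, c₁ ≠ c₂ ∧ c₁ ≠ T.root ∧ c₂ ≠ T.root ∧ T.parent c₁ = T.parent c₂ ∧
      T.Anc c₁ v ∧ T.Anc c₂ w := by
  classical
  have hex : ∃ n, T.Anc (T.parent^[n] v) w := by
    obtain ⟨m, hm⟩ := T.reaches_root v
    exact ⟨m, hm ▸ T.reaches_root w⟩
  obtain ⟨k, hk⟩ : ∃ k, Nat.find hex = k + 1 := by
    refine Nat.exists_eq_add_one.mpr (Nat.pos_of_ne_zero fun h => hvw ?_)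
    simpa [h] using Nat.find_spec hex
  set c₁ := T.parent^[k] v
  have hq : T.Anc (T.parent c₁) w := by
    have := Nat.find_spec hex
    rwa [hk, Function.iterate_succ_apply'] at this
  have hc₁ : ¬ T.Anc c₁ w := Nat.find_min hex (by omega)
  have hwq : w ≠ T.parent c₁ := by
    rintro rfl
    exact hwv ⟨k + 1, Function.iterate_succ_apply' _ _ _⟩
  obtain ⟨c₂, hc₂q, hc₂, hc₂w⟩ := exists_child_anc_of_anc hq hwq
  have hc₁q : T.parent c₁ ≠ c₁ := fun h => hc₁ (h ▸ hq)
  exact ⟨c₁, c₂, fun h => hc₁ (h ▸ hc₂w), ne_root_of_parent_ne hc₁q,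
    ne_root_of_parent_ne (by rw [hc₂q]; exact hc₂.symm), hc₂q.symm, ⟨k, rfl⟩, hc₂w⟩

end RTree

theorem slopeAngle_eq_slopeAngle_zero_sub (p q : Pt) : slopeAngle p q = slopeAngle 0 (q - p) := by
  simp [slopeAngle]

theorem slopeAngle_zero_smul {κ : ℝ} (hκ : 0 < κ) (v : Pt) :
    slopeAngle 0 (κ • v) = slopeAngle 0 v := by
  have hz : (⟨κ * v.1, κ * v.2⟩ : ℂ) = (κ : ℂ) * ⟨v.1, v.2⟩ := by
    apply Complex.ext <;> simp
  simp only [slopeAngle, Prod.fst_zero, Prod.snd_zero, sub_zero, Prod.smul_fst, Prod.smul_snd,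
    smul_eq_mul, hz, Complex.arg_real_mul _ hκ]

theorem slopeAngle_eq_of_sub_eq_smul {p q p' q' : Pt} {κ : ℝ} (hκ : 0 < κ)
    (h : q' - p' = κ • (q - p)) : slopeAngle p' q' = slopeAngle p q := by
  rw [slopeAngle_eq_slopeAngle_zero_sub, h, slopeAngle_zero_smul hκ,
    ← slopeAngle_eq_slopeAngle_zero_sub]

theorem mem_Ioo_iff_sin_sub {θ α β : ℝ} (hθ : θ ∈ Ioc (-π) π) (hα : 0 ≤ α) (hαβ : α < β)
    (hβ : β ≤ π) : θ ∈ Ioo α β ↔ 0 < sin (θ - α) ∧ sin (θ - β) < 0 := by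
  obtain ⟨hθ₁, hθ₂⟩ := hθ
  constructor
  · rintro ⟨h₁, h₂⟩
    exact ⟨sin_pos_of_pos_of_lt_pi (by linarith) (by linarith),
      sin_neg_of_neg_of_neg_pi_lt (by linarith) (by linarith)⟩
  · rintro ⟨h₁, h₂⟩
    refine ⟨?_, ?_⟩
    · by_contra! hθα
      rcases le_or_gt (-π) (θ - α) with h | h
      · linarith [sin_nonpos_of_nonpos_of_neg_pi_le (by linarith : θ - α ≤ 0) h]
      · -- `θ - α < -π` puts `θ - β` in `(-2π, -π)`, where the sine is positive
        have := sin_pos_of_pos_of_lt_pi (x := θ - β + 2 * π) (by linarith) (by linarith)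
        rw [sin_add_two_pi] at this
        linarith
    · by_contra! hθβ
      linarith [sin_nonneg_of_nonneg_of_le_pi (by linarith : 0 ≤ θ - β) (by linarith)]

/-- The cross product of the unit vector of direction `α` with `v`. -/
noncomputable def dirCross (α : ℝ) (v : Pt) : ℝ := cos α * v.2 - sin α * v.1

noncomputable def sectorCone (α β : ℝ) : ConvexCone ℝ Pt where
  carrier := {v | 0 < dirCross α v ∧ dirCross β v < 0}
  smul_mem' c hc v hv := by
    simp only [mem_ofPred_eq, dirCross, Prod.smul_fst, Prod.smul_snd, smul_eq_mul] at hv ⊢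
    constructor <;> nlinarith [hv.1, hv.2]
  add_mem' v hv w hw := by
    simp only [mem_ofPred_eq, dirCross, Prod.fst_add, Prod.snd_add] at hv hw ⊢
    constructor <;> linarith [hv.1, hv.2, hw.1, hw.2]

theorem mem_sectorCone {α β : ℝ} {v : Pt} :
    v ∈ sectorCone α β ↔ 0 < dirCross α v ∧ dirCross β v < 0 := Iff.rfl

theorem zero_notMem_sectorCone (α β : ℝ) : (0 : Pt) ∉ sectorCone α β := by
  simp [mem_sectorCone, dirCross]

theorem mem_sectorCone_iff {α β : ℝ} (hα : 0 ≤ α) (hαβ : α < β) (hβ : β ≤ π) (v : Pt) :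
    v ∈ sectorCone α β ↔ slopeAngle 0 v ∈ Ioo α β := by
  set z : ℂ := ⟨v.1, v.2⟩
  have hslope : slopeAngle 0 v = if z.arg < 0 then z.arg + 2 * π else z.arg := by
    simp [slopeAngle, z]
  by_cases hz : z = 0
  · obtain rfl : v = 0 := Prod.ext (congrArg Complex.re hz) (congrArg Complex.im hz)
    have h₀ : slopeAngle 0 0 = 0 := by simp [slopeAngle, show (⟨0, 0⟩ : ℂ) = 0 from rfl]
    simp only [zero_notMem_sectorCone, h₀, false_iff, mem_Ioo, not_and, not_lt]
    intro h
    linarith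
  have hnorm : 0 < ‖z‖ := norm_pos_iff.mpr hz
  have hcross : ∀ γ, dirCross γ v = ‖z‖ * sin (z.arg - γ) := by
    intro γ
    have hre : ‖z‖ * cos z.arg = v.1 := z.norm_mul_cos_arg
    have him : ‖z‖ * sin z.arg = v.2 := z.norm_mul_sin_arg
    rw [dirCross, sin_sub]
    linear_combination -cos γ * him + sin γ * hre
  rw [mem_sectorCone, hcross, hcross, mul_pos_iff_of_pos_left hnorm, ← neg_pos, ← mul_neg,
    mul_pos_iff_of_pos_left hnorm, neg_pos,
    ← mem_Ioo_iff_sin_sub ⟨z.neg_pi_lt_arg, z.arg_le_pi⟩ hα hαβ hβ, hslope]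
  split_ifs with hneg
  · simp only [mem_Ioo]
    constructor <;> intro h <;> linarith [h.1, h.2, z.neg_pi_lt_arg]
  · rfl

theorem snd_pos_of_mem_sectorCone {α β : ℝ} (hα : 0 ≤ α) (hαβ : α < β) (hβ : β ≤ π) {v : Pt}
    (hv : v ∈ sectorCone α β) : 0 < v.2 := by
  have h := (mem_sectorCone_iff hα hαβ hβ v).mp hv
  have h₀ := (mem_sectorCone_iff le_rfl pi_pos le_rfl v).mpr ⟨by linarith [h.1], by linarith [h.2]⟩
  simpa [mem_sectorCone, dirCross] using h₀.1

theorem snd_le_of_mem_segment {x y p : Pt} (hxy : x.2 ≤ y.2) (hp : p ∈ segment ℝ x y) :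
    p.2 ≤ y.2 := by
  obtain ⟨s, t, hs, ht, hst, rfl⟩ := hp
  calc s * x.2 + t * y.2 ≤ s * y.2 + t * y.2 := by gcongr
    _ = y.2 := by rw [← add_mul, hst, one_mul]

def SubtreeSlopesWithin {V : Type*} (T : RTree V) (E : V → Pt) (a1 a2 : V → ℝ) : Prop :=
  (∀ v, 0 ≤ a1 v ∧ a1 v < a2 v ∧ a2 v ≤ π) ∧
    ∀ c w, w ≠ T.root → T.Anc c w → slopeAngle (E (T.parent w)) (E w) ∈ Ioo (a1 c) (a2 c)

namespace SubtreeSlopesWithin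

variable {V : Type*} {T : RTree V} {E : V → Pt} {a1 a2 : V → ℝ} {b c d w : V}

theorem mem_sectorCone_iff (h : SubtreeSlopesWithin T E a1 a2) (c : V) (v : Pt) :
    v ∈ sectorCone (a1 c) (a2 c) ↔ slopeAngle 0 v ∈ Ioo (a1 c) (a2 c) :=
  _root_.mem_sectorCone_iff (h.1 c).1 (h.1 c).2.1 (h.1 c).2.2 v

theorem snd_pos_of_mem_sectorCone (h : SubtreeSlopesWithin T E a1 a2) {v : Pt}
    (hv : v ∈ sectorCone (a1 c) (a2 c)) : 0 < v.2 :=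
  _root_.snd_pos_of_mem_sectorCone (h.1 c).1 (h.1 c).2.1 (h.1 c).2.2 hv

theorem edge_mem_sectorCone (h : SubtreeSlopesWithin T E a1 a2) (hw : w ≠ T.root)
    (hcw : T.Anc c w) : E w - E (T.parent w) ∈ sectorCone (a1 c) (a2 c) := by
  rw [h.mem_sectorCone_iff, ← slopeAngle_eq_slopeAngle_zero_sub]
  exact h.2 c w hw hcw

theorem sub_mem_sectorCone (h : SubtreeSlopesWithin T E a1 a2) (hc : c ≠ T.root)
    (hcw : T.Anc c w) : E w - E (T.parent c) ∈ sectorCone (a1 c) (a2 c) := by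
  refine hcw.induction_on (h.edge_mem_sectorCone hc (T.anc_refl_s14 c)) fun w _ hcpw hpw => ?_
  have hw : w ≠ T.root := by
    rintro rfl
    exact hc (RTree.eq_root_of_anc_root (T.parent_root ▸ hcpw))
  have := add_mem (h.edge_mem_sectorCone hw hcpw.of_parent) hpw
  rwa [sub_add_sub_cancel] at this

theorem sub_mem_sectorCone_of_mem_segment (h : SubtreeSlopesWithin T E a1 a2)
    (hc : c ≠ T.root) (hcw : T.Anc c w) {p : Pt}
    (hp : p ∈ segment ℝ (E (T.parent w)) (E w)) :
    (w = c ∧ p = E (T.parent c)) ∨ p - E (T.parent c) ∈ sectorCone (a1 c) (a2 c) := by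
  by_cases hwc : w = c
  · subst hwc
    rw [segment_eq_image'] at hp
    obtain ⟨t, ht, rfl⟩ := hp
    rcases ht.1.eq_or_lt with rfl | htpos
    · simp
    · right
      simpa using (sectorCone _ _).smul_mem htpos (h.edge_mem_sectorCone hc (T.anc_refl_s14 w))
  · right
    have hp' : p - E (T.parent c) ∈
        segment ℝ (E (T.parent w) - E (T.parent c)) (E w - E (T.parent c)) := by
      simpa [sub_eq_neg_add] using (mem_segment_translate ℝ (-E (T.parent c))).mpr hp
    exact (sectorCone _ _).convex.segment_subset
      (h.sub_mem_sectorCone hc (hcw.parent_of_ne hwc)) (h.sub_mem_sectorCone hc hcw) hp'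

theorem eq_of_mem_segment_of_anc (h : SubtreeSlopesWithin T E a1 a2) (hb : b ≠ T.root)
    (hbd : b ≠ d) (hanc : T.Anc b d) {p : Pt}
    (hpb : p ∈ segment ℝ (E (T.parent b)) (E b)) (hpd : p ∈ segment ℝ (E (T.parent d)) (E d)) :
    T.parent d = b ∧ p = E b := by
  obtain ⟨c, hcb, hc, hcd⟩ := T.exists_child_anc_of_anc hanc (Ne.symm hbd)
  have hc_root : c ≠ T.root := RTree.ne_root_of_parent_ne (by rw [hcb]; exact hc.symm)
  rcases h.sub_mem_sectorCone_of_mem_segment hc_root hcd hpd with ⟨rfl, hp⟩ | hp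
  · exact ⟨hcb, hcb ▸ hp⟩
  · -- all sectors open upwards, while the edge entering `b` arrives from below
    rw [hcb] at hp
    have habove := h.snd_pos_of_mem_sectorCone hp
    have hedge := h.snd_pos_of_mem_sectorCone (h.edge_mem_sectorCone hb (T.anc_refl_s14 b))
    simp only [Prod.snd_sub, sub_pos] at habove hedge
    linarith [snd_le_of_mem_segment hedge.le hpb]

end SubtreeSlopesWithin

theorem NonStrictlySlopeDisjoint.planarTreeDrawing {V : Type*} {T : RTree V} {E : V → Pt}
    (hE : NonStrictlySlopeDisjoint T E) : PlanarTreeDrawing T E := by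
  obtain ⟨a1, a2, hrange, hslope, -, hdisj⟩ := hE
  have h : SubtreeSlopesWithin T E a1 a2 := ⟨hrange, hslope⟩
  intro b d hb hd hbd p hpb hpd
  by_cases hbd' : T.Anc b d
  · obtain ⟨hpar, rfl⟩ := h.eq_of_mem_segment_of_anc hb hbd hbd' hpb hpd
    exact ⟨b, Or.inr rfl, Or.inl hpar.symm, rfl⟩
  by_cases hdb : T.Anc d b
  · obtain ⟨hpar, rfl⟩ := h.eq_of_mem_segment_of_anc hd (Ne.symm hbd) hdb hpd hpb
    exact ⟨d, Or.inl hpar.symm, Or.inr rfl, rfl⟩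
  obtain ⟨c₁, c₂, hc₁₂, hc₁, hc₂, hsib, hc₁b, hc₂d⟩ := T.exists_siblings_of_not_anc hbd' hdb
  rcases h.sub_mem_sectorCone_of_mem_segment hc₁ hc₁b hpb with ⟨rfl, rfl⟩ | h₁ <;>
    rcases h.sub_mem_sectorCone_of_mem_segment hc₂ hc₂d hpd with ⟨rfl, hp⟩ | h₂
  · exact ⟨T.parent b, Or.inl rfl, Or.inl hsib, rfl⟩
  · rw [← hsib, sub_self] at h₂
    exact absurd h₂ (zero_notMem_sectorCone _ _)
  · rw [hp, hsib, sub_self] at h₁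
    exact absurd h₁ (zero_notMem_sectorCone _ _)
  · rw [← hsib] at h₂
    have k₁ := (h.mem_sectorCone_iff c₁ _).mp h₁
    have k₂ := (h.mem_sectorCone_iff c₂ _).mp h₂
    rcases hdisj c₁ c₂ hc₁ hc₂ hc₁₂ hsib with hle | hle
    · linarith [k₁.2, k₂.1]
    · linarith [k₂.2, k₁.1]

def IsEdgewiseRescaling {V : Type*} (T : RTree V) (D E : V → Pt) : Prop :=
  ∀ v, ∃ κ : ℝ, 0 < κ ∧ E v - E (T.parent v) = κ • (D v - D (T.parent v))

theorem isEdgewiseRescaling_elongate {V : Type*} (T : RTree V) (D : V → Pt) (u : V) (lam : ℕ) :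
    IsEdgewiseRescaling T D (elongate T D u lam) := by
  intro b
  by_cases hb : T.Anc u b
  · by_cases hpb : T.Anc u (T.parent b)
    · refine ⟨1, one_pos, ?_⟩
      simp only [elongate, if_pos hb, if_pos hpb]
      module
    · obtain rfl : b = u := by
        by_contra hbu
        exact hpb (hb.parent_of_ne hbu)
      refine ⟨1 + lam, by positivity, ?_⟩
      simp only [elongate, if_pos hb, if_neg hpb]
      module
  · refine ⟨1, one_pos, ?_⟩
    simp only [elongate, if_neg hb, if_neg (mt RTree.Anc.of_parent hb)]
    module

namespace IsEdgewiseRescaling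

variable {V : Type*} {T : RTree V} {D E : V → Pt} {a b : V}

theorem exists_pos_smul_of_adj (h : IsEdgewiseRescaling T D E) (hab : T.TAdj a b) :
    ∃ κ : ℝ, 0 < κ ∧ E b - E a = κ • (D b - D a) := by
  obtain ⟨-, rfl | rfl⟩ := hab
  · obtain ⟨κ, hκ, hE⟩ := h a
    exact ⟨κ, hκ, by rw [← neg_sub, hE, ← smul_neg, neg_sub]⟩
  · exact h b

theorem slopeAngle_parent_eq (h : IsEdgewiseRescaling T D E) (w : V) :
    slopeAngle (E (T.parent w)) (E w) = slopeAngle (D (T.parent w)) (D w) := by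
  obtain ⟨κ, hκ, hE⟩ := h w
  exact slopeAngle_eq_of_sub_eq_smul hκ hE

theorem edgeDirs_eq (h : IsEdgewiseRescaling T D E) (v : V) :
    edgeDirs T E v = edgeDirs T D v := by
  ext θ
  refine exists_congr fun w => and_congr_right fun hw => ?_
  obtain ⟨κ, hκ, hE⟩ := h.exists_pos_smul_of_adj hw
  rw [slopeAngle_eq_of_sub_eq_smul hκ hE]

theorem monotoneTreeDrawing (h : IsEdgewiseRescaling T D E) (hD : MonotoneTreeDrawing T D) :
    MonotoneTreeDrawing T E := by
  intro v w
  obtain ⟨p, d, hd, hhead, hlast, hadj, hproj⟩ := hD v w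
  refine ⟨p, d, hd, hhead, hlast, hadj, (List.isChain_map _).mpr ?_⟩
  refine (List.IsChain.and hadj ((List.isChain_map _).mp hproj)).imp fun a b ⟨hab, hlt⟩ => ?_
  obtain ⟨κ, hκ, hE⟩ := h.exists_pos_smul_of_adj hab
  obtain ⟨h₁, h₂⟩ := Prod.ext_iff.mp hE
  simp only [Prod.fst_sub, Prod.snd_sub, Prod.smul_fst, Prod.smul_snd, smul_eq_mul] at h₁ h₂
  have hscale : d.1 * (E b).1 + d.2 * (E b).2 - (d.1 * (E a).1 + d.2 * (E a).2) =
      κ * (d.1 * (D b).1 + d.2 * (D b).2 - (d.1 * (D a).1 + d.2 * (D a).2)) := by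
    linear_combination d.1 * h₁ + d.2 * h₂
  linarith [mul_pos hκ (sub_pos.mpr hlt)]

theorem nearConvex (h : IsEdgewiseRescaling T D E) (hD : NearConvex T D) : NearConvex T E := by
  obtain ⟨hmono, b₁, b₂, hconvex⟩ := hD
  refine ⟨h.monotoneTreeDrawing hmono, b₁, b₂, fun v θ₁ θ₂ hθ => hconvex v θ₁ θ₂ ?_⟩
  simpa only [ConsecutiveAt, h.edgeDirs_eq] using hθ

theorem nonStrictlySlopeDisjoint (h : IsEdgewiseRescaling T D E)
    (hD : NonStrictlySlopeDisjoint T D) : NonStrictlySlopeDisjoint T E := by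
  obtain ⟨a1, a2, hrange, hslope, hnest, hdisj⟩ := hD
  refine ⟨a1, a2, hrange, fun c w hw hcw => ?_, hnest, hdisj⟩
  rw [h.slopeAngle_parent_eq w]
  exact hslope c w hw hcw

end IsEdgewiseRescaling

theorem elongation_preserves_properties_general {V : Type*} (T : RTree V) (D : V → Pt)
    (u : V) (lam : ℕ)
    (hmono : MonotoneTreeDrawing T D) (hnc : NearConvex T D)
    (hsd : NonStrictlySlopeDisjoint T D) :
    MonotoneTreeDrawing T (elongate T D u lam) ∧
    NearConvex T (elongate T D u lam) ∧
    NonStrictlySlopeDisjoint T (elongate T D u lam) ∧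
    PlanarTreeDrawing T (elongate T D u lam) := by
  have h := isEdgewiseRescaling_elongate T D u lam
  have hsd' := h.nonStrictlySlopeDisjoint hsd
  exact ⟨h.monotoneTreeDrawing hmono, h.nearConvex hnc, hsd', hsd'.planarTreeDrawing⟩

/-- The `λ`-elongation of a tree edge `(parent u, u)` preserves
monotonicity, near-convexity and non-strict slope-disjointness of a tree drawing
(and in particular the elongated drawing is planar). -/
theorem elongation_preserves_properties {V : Type*} (T : RTree V) (D : V → Pt)
    (hinj : Function.Injective D) (u : V) (hu : u ≠ T.root) (lam : ℕ)
    (hmono : MonotoneTreeDrawing T D) (hnc : NearConvex T D)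
    (hsd : NonStrictlySlopeDisjoint T D) :
    MonotoneTreeDrawing T (elongate T D u lam) ∧
    NearConvex T (elongate T D u lam) ∧
    NonStrictlySlopeDisjoint T (elongate T D u lam) ∧
    PlanarTreeDrawing T (elongate T D u lam) :=
  elongation_preserves_properties_general T D u lam hmono hnc hsd
end
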